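/- arXiv:2212.03668 — 3 statements merged into one kernel-verified Lean document; each statement's English description precedes it below -/
import Mathlib

section
/- For every n ≥ 1 and every Boolean function f : {0,1}^n → {0,1}, setting k = 2^n − 1, there exist subsets S_1, …, S_k of {0,…,n−1} and real numbers θ_1,…,θ_k and φ_1,…,φ_k such that for every x ∈ {0,1}^n, ⟨v, (⊗_{i=1}^k M_i(x)) v⟩ = (−1)^{f(x)}, where M_i(x) = cos(θ_i + φ_i·χ_{S_i}(x))·σx + sin(θ_i + φ_i·χ_{S_i}(x))·σy and v is the k-qubit GHZ state. In other words, any n-bit Boolean function can be evaluated deterministically by non-adaptive single-qubit equatorial measurements, selected via parity functions of the input, on a (2^n − 1)-qubit GHZ state. -/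
/-!
Sandwiched between the two nonzero GHZ components, a tensor product of equatorial measurement
operators only contributes its corner entries `⟨0…0|⊗ M(αᵢ)|1…1⟩ = e^{-i∑αᵢ}` and its conjugate,
so its GHZ expectation is `cos (∑ αᵢ)`. By Walsh–Fourier inversion on `{0,1}ⁿ`, the function
`π f(x)` is an affine combination `a + ∑_{S ≠ ∅} c_S χ_S(x)` of the `2ⁿ − 1` nontrivial parities
(using `(-1)^{χ_S} = 1 - 2χ_S`). Giving one qubit to each nonempty `S`, with slope `c_S` and an
equal share of `a` as offset, makes the angles add up to `π f(x)`, whose cosine is `(-1)^{f(x)}`.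
-/

open scoped BigOperators

/-- The Pauli X matrix. -/
noncomputable def sigmaX : Matrix (Fin 2) (Fin 2) ℂ := !![0, 1; 1, 0]

/-- The Pauli Y matrix. -/
noncomputable def sigmaY : Matrix (Fin 2) (Fin 2) ℂ := !![0, -Complex.I; Complex.I, 0]

/-- Equatorial single-qubit measurement operator with angle `α`. -/
noncomputable def Meq (α : ℝ) : Matrix (Fin 2) (Fin 2) ℂ :=
  (Real.cos α : ℂ) • sigmaX + (Real.sin α : ℂ) • sigmaY

/-- Tensor product of `k` single-qubit operators. -/
noncomputable def tensorOp {k : ℕ} (M : Fin k → Matrix (Fin 2) (Fin 2) ℂ) :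
    Matrix (Fin k → Fin 2) (Fin k → Fin 2) ℂ :=
  fun a b => ∏ i, M i (a i) (b i)

/-- The `k`-qubit GHZ state. -/
noncomputable def ghz (k : ℕ) : (Fin k → Fin 2) → ℂ :=
  fun a => if (∀ i, a i = 0) ∨ (∀ i, a i = 1) then ((Real.sqrt 2 : ℝ) : ℂ)⁻¹ else 0

/-- Standard Hermitian inner product, conjugate linear in the first argument. -/
noncomputable def inprod {ι : Type} [Fintype ι] (v w : ι → ℂ) : ℂ :=
  ∑ a, (starRingEnd ℂ) (v a) * w a

/-- The parity `χ_S(x) = ⊕_{i ∈ S} x_i ∈ {0,1}`. -/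
def chi {n : ℕ} (S : Finset (Fin n)) (x : Fin n → Bool) : ℕ :=
  (∑ i ∈ S, if x i then 1 else 0) % 2

open Complex Matrix

lemma inprod_smul_single_add_single_mulVec {ι : Type} [Fintype ι] [DecidableEq ι]
    (T : Matrix ι ι ℂ) (c : ℝ) (p q : ι) :
    inprod ((c : ℂ) • (Pi.single p 1 + Pi.single q 1))
        (T *ᵥ ((c : ℂ) • (Pi.single p 1 + Pi.single q 1)))
      = (c ^ 2 : ℝ) * (T p p + T p q + T q p + T q q) := by
  set v : ι → ℂ := (c : ℂ) • (Pi.single p 1 + Pi.single q 1)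
  have hstar : star v = v := by
    ext a
    simp only [v, Pi.star_apply, Pi.smul_apply, Pi.add_apply, Pi.single_apply]
    split_ifs <;> simp
  change star v ⬝ᵥ (T *ᵥ v) = _
  rw [hstar]
  simp only [v, mulVec_smul, mulVec_add, mulVec_single_one, smul_dotProduct, add_dotProduct,
    single_one_dotProduct, smul_eq_mul]
  simp only [Pi.smul_apply, Pi.add_apply, col_apply, smul_eq_mul, ofReal_pow]
  ring

lemma ghz_eq_smul {k : ℕ} (hk : 0 < k) :
    ghz k = (((Real.sqrt 2)⁻¹ : ℝ) : ℂ) • (Pi.single 0 1 + Pi.single 1 1) := by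
  have h01 : (0 : Fin k → Fin 2) ≠ 1 := fun h => by simpa using congrFun h ⟨0, hk⟩
  ext a
  by_cases h0 : a = 0
  · subst h0
    simp [ghz, h01]
  by_cases h1 : a = 1
  · subst h1
    simp [ghz, h01.symm]
  · have : ¬((∀ i, a i = 0) ∨ (∀ i, a i = 1)) := by simpa [funext_iff] using And.intro h0 h1
    simp [ghz, this, h0, h1]

@[simp] lemma Meq_apply_zero_zero (α : ℝ) : Meq α 0 0 = 0 := by simp [Meq, sigmaX, sigmaY]

@[simp] lemma Meq_apply_one_one (α : ℝ) : Meq α 1 1 = 0 := by simp [Meq, sigmaX, sigmaY]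

lemma Meq_apply_zero_one (α : ℝ) : Meq α 0 1 = exp (-α * I) := by
  rw [← ofReal_neg, exp_mul_I]
  simp [Meq, sigmaX, sigmaY]

lemma Meq_apply_one_zero (α : ℝ) : Meq α 1 0 = exp (α * I) := by
  rw [exp_mul_I]
  simp [Meq, sigmaX, sigmaY]

section tensorOp

variable {k : ℕ} (α : Fin k → ℝ)

lemma tensorOp_Meq_apply_zero_zero (hk : 0 < k) : tensorOp (fun i => Meq (α i)) 0 0 = 0 :=
  Finset.prod_eq_zero (Finset.mem_univ ⟨0, hk⟩) (by simp)

lemma tensorOp_Meq_apply_one_one (hk : 0 < k) : tensorOp (fun i => Meq (α i)) 1 1 = 0 :=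
  Finset.prod_eq_zero (Finset.mem_univ ⟨0, hk⟩) (by simp)

lemma tensorOp_Meq_apply_zero_one :
    tensorOp (fun i => Meq (α i)) 0 1 = exp (-(∑ i, α i : ℝ) * I) := by
  simp only [tensorOp, Pi.zero_apply, Pi.one_apply, Meq_apply_zero_one, ← exp_sum]
  push_cast
  simp [Finset.sum_mul]

lemma tensorOp_Meq_apply_one_zero :
    tensorOp (fun i => Meq (α i)) 1 0 = exp ((∑ i, α i : ℝ) * I) := by
  simp only [tensorOp, Pi.zero_apply, Pi.one_apply, Meq_apply_one_zero, ← exp_sum]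
  push_cast
  simp [Finset.sum_mul]

theorem inprod_ghz_tensorOp_Meq (hk : 0 < k) :
    inprod (ghz k) ((tensorOp fun i => Meq (α i)) *ᵥ ghz k) = Real.cos (∑ i, α i) := by
  have hsq : (Real.sqrt 2)⁻¹ ^ 2 = (2⁻¹ : ℝ) := by rw [inv_pow, Real.sq_sqrt zero_le_two]
  rw [ghz_eq_smul hk, inprod_smul_single_add_single_mulVec, tensorOp_Meq_apply_zero_zero α hk,
    tensorOp_Meq_apply_one_one α hk, tensorOp_Meq_apply_zero_one, tensorOp_Meq_apply_one_zero,
    ofReal_cos, cos, hsq]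
  push_cast
  ring_nf

end tensorOp

section walsh

variable {n : ℕ}

def walsh (S : Finset (Fin n)) (x : Fin n → Bool) : ℝ :=
  ∏ i ∈ S, if x i then -1 else 1

lemma walsh_eq_one_sub_two_mul_chi (S : Finset (Fin n)) (x : Fin n → Bool) :
    walsh S x = 1 - 2 * (chi S x : ℝ) := by
  have h : walsh S x = (-1 : ℝ) ^ (∑ i ∈ S, if x i then 1 else 0) := by
    rw [← Finset.prod_pow_eq_pow_sum]
    exact Finset.prod_congr rfl fun i _ => by cases x i <;> simp
  rw [h, chi]
  generalize ∑ i ∈ S, (if x i then 1 else 0) = m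
  rcases Nat.even_or_odd m with hm | hm
  · simp [hm.neg_one_pow, Nat.even_iff.1 hm]
  · rw [hm.neg_one_pow, Nat.odd_iff.1 hm]
    norm_num

lemma sum_walsh_mul_walsh (x y : Fin n → Bool) :
    ∑ S : Finset (Fin n), walsh S x * walsh S y = if x = y then (2 : ℝ) ^ n else 0 := by
  have h : ∀ S : Finset (Fin n),
      walsh S x * walsh S y = ∏ i ∈ S, if x i = y i then (1 : ℝ) else -1 := fun S => by
    rw [walsh, walsh, ← Finset.prod_mul_distrib]
    exact Finset.prod_congr rfl fun i _ => by cases x i <;> cases y i <;> simp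
  simp_rw [h, ← Finset.powerset_univ, ← Finset.prod_one_add]
  split_ifs with hxy
  · simp [hxy, Finset.prod_const, one_add_one_eq_two]
  · obtain ⟨j, hj⟩ : ∃ j, x j ≠ y j := Function.ne_iff.1 hxy
    exact Finset.prod_eq_zero (Finset.mem_univ j) (by simp [hj])

noncomputable def walshCoeff (g : (Fin n → Bool) → ℝ) (S : Finset (Fin n)) : ℝ :=
  (2 ^ n)⁻¹ * ∑ y, g y * walsh S y

lemma sum_walshCoeff_mul_walsh (g : (Fin n → Bool) → ℝ) (x : Fin n → Bool) :
    ∑ S, walshCoeff g S * walsh S x = g x := by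
  simp_rw [walshCoeff, mul_assoc, ← Finset.mul_sum, Finset.sum_mul, mul_assoc]
  rw [Finset.sum_comm]
  simp_rw [← Finset.mul_sum, sum_walsh_mul_walsh, mul_ite, mul_zero, Finset.sum_ite_eq',
    Finset.mem_univ, if_true]
  field_simp

lemma exists_eq_add_sum_mul_chi (g : (Fin n → Bool) → ℝ) :
    ∃ (a : ℝ) (c : Finset (Fin n) → ℝ), ∀ x, g x = a + ∑ S, c S * (chi S x : ℝ) := by
  refine ⟨∑ S, walshCoeff g S, fun S => -2 * walshCoeff g S, fun x => ?_⟩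
  rw [← sum_walshCoeff_mul_walsh g x, ← Finset.sum_add_distrib]
  exact Finset.sum_congr rfl fun S _ => by rw [walsh_eq_one_sub_two_mul_chi]; ring

end walsh

lemma exists_sum_fin_eq_sum_finset (n : ℕ) :
    ∃ E : Fin (2 ^ n - 1) → Finset (Fin n),
      ∀ w : Finset (Fin n) → ℝ, w ∅ = 0 → ∑ i, w (E i) = ∑ S, w S := by
  classical
  have hcard : Fintype.card (Finset.univ.erase (∅ : Finset (Fin n))) = 2 ^ n - 1 := by simp
  let e := (Fintype.equivFinOfCardEq hcard).symm
  refine ⟨fun i => (e i).1, fun w hw => ?_⟩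
  rw [e.sum_comp (fun S => w S.1), Finset.sum_coe_sort, Finset.sum_erase _ hw]


/-- Any `n`-bit Boolean function can be evaluated deterministically by non-adaptive
single-qubit equatorial measurements, selected via parity functions of the input, on a
`(2^n − 1)`-qubit GHZ state. -/
theorem nmqc_universality (n : ℕ) (hn : 1 ≤ n) (f : (Fin n → Bool) → Bool) :
    ∃ (S : Fin (2 ^ n - 1) → Finset (Fin n)) (θ φ : Fin (2 ^ n - 1) → ℝ),
      ∀ x : Fin n → Bool,
        inprod (ghz (2 ^ n - 1))
          ((tensorOp fun i => Meq (θ i + φ i * (chi (S i) x : ℝ))).mulVec (ghz (2 ^ n - 1)))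
          = (if f x then (-1 : ℂ) else 1) := by
  have hk : 0 < 2 ^ n - 1 := Nat.sub_pos_of_lt (Nat.one_lt_two_pow (by omega))
  obtain ⟨E, hE⟩ := exists_sum_fin_eq_sum_finset n
  obtain ⟨a, c, hac⟩ := exists_eq_add_sum_mul_chi fun x => if f x then Real.pi else 0
  refine ⟨E, fun _ => a / (2 ^ n - 1 : ℕ), fun i => c (E i), fun x => ?_⟩
  have hangles : ∑ i, (a / (2 ^ n - 1 : ℕ) + c (E i) * chi (E i) x)
      = if f x then Real.pi else 0 := by
    rw [Finset.sum_add_distrib, hE (fun S => c S * chi S x) (by simp [chi]), hac x,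
      Finset.sum_const, Finset.card_univ, Fintype.card_fin, nsmul_eq_mul,
      mul_div_cancel₀ _ (Nat.cast_ne_zero.2 hk.ne')]
  rw [inprod_ghz_tensorOp_Meq _ hk, hangles]
  split_ifs <;> simp
end

section
/- Let f : {0,1}^n → {0,1} be a symmetric Boolean function with representation f(x) = ⊕_{i=0}^n c_i · C^i(x) for all x, where c_i ∈ {0,1}. Suppose that for every r with 2^r ≤ n we are given an integer-valued function p_r : {0,1}^n → ℤ satisfying p_r(x) ≡ C^{2^r}(x) (mod 2) for all x. Then for every x ∈ {0,1}^n, Σ_{i=0}^n c_i · ∏_{r ∈ R_i} p_r(x) ≡ f(x) (mod 2), where the empty product (for i = 0) equals 1. -/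
open scoped BigOperators

/-- The complete symmetric function `C^k(x)`: the parity of the number of `k`-element
subsets of the support of `x` (`C^0` is the constant 1 function). -/
def Csf {n : ℕ} (k : ℕ) (x : Fin n → Bool) : Bool :=
  decide (Odd ((Finset.univ.filter fun i => x i = true).powersetCard k).card)

/-- `R_i`: the set of binary digit positions of `i` (so `i = Σ_{r ∈ R_i} 2^r`, `R_0 = ∅`). -/
def Rset (i : ℕ) : Finset ℕ :=
  (Finset.range (i + 1)).filter fun r => i.testBit r

private lemma digit_eq (k i : ℕ) : k / 2 ^ i % 2 = if k.testBit i then 1 else 0 := by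
  have h : k.testBit i = decide (k / 2 ^ i % 2 = 1) := Nat.testBit_eq_decide_div_mod_eq
  have h2 : k / 2 ^ i % 2 < 2 := Nat.mod_lt _ (by norm_num)
  split_ifs with hb
  · rw [h, decide_eq_true_iff] at hb; exact hb
  · rw [h, decide_eq_true_iff] at hb; omega

private lemma Rset_eq {k a : ℕ} (hk : k < 2 ^ a) :
    Rset k = (Finset.range a).filter (fun r => k.testBit r) := by
  ext r
  simp only [Rset, Finset.mem_filter, Finset.mem_range, and_congr_left_iff]
  intro hb
  have h1 : 2 ^ r ≤ k := Nat.ge_two_pow_of_testBit hb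
  have h2 : r < 2 ^ r := (Nat.lt_two_pow_self (n := r))
  have h3 : r < a := by
    by_contra h
    exact absurd (le_trans (Nat.pow_le_pow_right (by norm_num) (le_of_not_gt h)) h1)
      (not_le.mpr hk)
  omega

/-- Lucas-type lemma: `choose m k ≡ ∏_{r ∈ R_k} choose m (2^r) (mod 2)`. -/
private lemma choose_cast_eq (m k : ℕ) :
    ((m.choose k : ZMod 2)) = ∏ r ∈ Rset k, ((m.choose (2 ^ r) : ZMod 2)) := by
  haveI : Fact (Nat.Prime 2) := ⟨Nat.prime_two⟩
  set a := m + k + 1 with ha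
  have hm : m < 2 ^ a := lt_of_lt_of_le ((Nat.lt_two_pow_self (n := m)))
    (Nat.pow_le_pow_right (by norm_num) (by omega))
  have hk : k < 2 ^ a := lt_of_lt_of_le ((Nat.lt_two_pow_self (n := k)))
    (Nat.pow_le_pow_right (by norm_num) (by omega))
  have lucas : ∀ k' : ℕ, k' < 2 ^ a → ((m.choose k' : ZMod 2)) =
      ∏ i ∈ Finset.range a, ((m / 2 ^ i % 2).choose (k' / 2 ^ i % 2) : ZMod 2) := by
    intro k' hk'
    have h := Choose.choose_modEq_prod_range_choose (p := 2) (n := m) (k := k') hm hk'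
    have := (ZMod.intCast_eq_intCast_iff _ _ _).mpr h
    push_cast at this ⊢
    exact this
  -- LHS
  rw [lucas k hk]
  have step1 : ∀ i ∈ Finset.range a,
      (((m / 2 ^ i % 2).choose (k / 2 ^ i % 2) : ZMod 2)) =
      if k.testBit i then ((m / 2 ^ i % 2 : ℕ) : ZMod 2) else 1 := by
    intro i _
    rw [digit_eq k i]
    split_ifs with hb <;> simp
  rw [Finset.prod_congr rfl step1, ← Finset.prod_filter, ← Rset_eq hk]
  -- RHS factors
  apply Finset.prod_congr rfl
  intro r hr
  have hrbit : k.testBit r = true := by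
    rw [Rset_eq hk] at hr; exact (Finset.mem_filter.mp hr).2
  have hra : r < a := by
    rw [Rset_eq hk] at hr; exact Finset.mem_range.mp (Finset.mem_filter.mp hr).1
  have h2r : (2 : ℕ) ^ r < 2 ^ a := by
    calc (2:ℕ) ^ r ≤ k := Nat.ge_two_pow_of_testBit hrbit
    _ < 2 ^ a := hk
  rw [lucas (2 ^ r) h2r]
  rw [Finset.prod_eq_single_of_mem r (Finset.mem_range.mpr hra)]
  · rw [digit_eq (2 ^ r) r, Nat.testBit_two_pow_self, if_pos rfl, Nat.choose_one_right]
  · intro i _ hir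
    rw [digit_eq (2 ^ r) i, Nat.testBit_two_pow_of_ne (Ne.symm hir), if_neg (by simp),
      Nat.choose_zero_right, Nat.cast_one]

private lemma csf_cast {n : ℕ} (k : ℕ) (x : Fin n → Bool) :
    ((if Csf k x then (1 : ZMod 2) else 0)) =
      (((Finset.univ.filter fun i => x i = true).card.choose k : ZMod 2)) := by
  unfold Csf
  rw [Finset.card_powersetCard]
  set c := (Finset.univ.filter fun i => x i = true).card.choose k with hc
  have h : (c : ZMod 2) = ((c % 2 : ℕ) : ZMod 2) := (ZMod.natCast_mod c 2).symm
  simp only [decide_eq_true_eq]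
  split_ifs with hodd
  · rw [h, (Nat.odd_iff).mp hodd]; norm_num
  · rw [h, Nat.even_iff.mp (Nat.not_odd_iff_even.mp hodd)]; norm_num

private lemma int_cast_if {P : Prop} [Decidable P] :
    (((if P then (1:ℤ) else 0) : ℤ) : ZMod 2) = if P then (1 : ZMod 2) else 0 := by
  split_ifs <;> simp

/-- If `f = ⊕_{i=0}^n c_i C^i` is a symmetric Boolean function and, for every `r` with
`2^r ≤ n`, `p_r : {0,1}^n → ℤ` satisfies `p_r ≡ C^{2^r} (mod 2)` pointwise, then
`Σ_{i=0}^n c_i ∏_{r ∈ R_i} p_r(x) ≡ f(x) (mod 2)` for every `x`. -/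
theorem symmetric_decomposition_mod_two (n : ℕ) (f : (Fin n → Bool) → Bool) (c : ℕ → Bool)
    (hrep : ∀ x : Fin n → Bool,
      (2 : ℤ) ∣ (∑ i ∈ Finset.range (n + 1),
          (if c i then 1 else 0) * (if Csf i x then 1 else 0))
        - (if f x then 1 else 0))
    (p : ℕ → (Fin n → Bool) → ℤ)
    (hp : ∀ r : ℕ, 2 ^ r ≤ n → ∀ x : Fin n → Bool,
      (2 : ℤ) ∣ p r x - (if Csf (2 ^ r) x then 1 else 0)) :
    ∀ x : Fin n → Bool,
      (2 : ℤ) ∣ (∑ i ∈ Finset.range (n + 1),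
          (if c i then 1 else 0) * ∏ r ∈ Rset i, p r x)
        - (if f x then 1 else 0) := by
  intro x
  set m := (Finset.univ.filter fun i => x i = true).card with hm
  -- translate divisibility into ZMod 2 equalities
  have key : ∀ a b : ℤ, ((2 : ℤ) ∣ a - b) ↔ ((a : ZMod 2) = (b : ZMod 2)) := by
    intro a b
    rw [ZMod.intCast_eq_intCast_iff, Int.ModEq]
    constructor
    · intro h; omega
    · intro h; omega
  rw [key]
  have hrep' := (key _ _).mp (hrep x)
  push_cast at hrep' ⊢
  rw [← hrep']
  apply Finset.sum_congr rfl
  intro i hi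
  congr 1
  -- show ∏ r ∈ Rset i, (p r x : ZMod 2) = (if Csf i x then 1 else 0 : ZMod 2)
  have hpcast : ∀ r ∈ Rset i, ((p r x : ℤ) : ZMod 2) = ((m.choose (2 ^ r) : ZMod 2)) := by
    intro r hr
    have hi' : i ≤ n := by
      have := Finset.mem_range.mp hi; omega
    have hrbit : i.testBit r = true := (Finset.mem_filter.mp hr).2
    have h2r : 2 ^ r ≤ n := le_trans (Nat.ge_two_pow_of_testBit hrbit) hi'
    have := (key _ _).mp (hp r h2r x)
    rw [this, int_cast_if, csf_cast]
  rw [csf_cast i x, choose_cast_eq]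
  exact Finset.prod_congr rfl hpcast
end

section
/- For every odd integer t and every natural number j, the single-qubit equatorial measurement operator M = cos(π t / 2^j)·σx + sin(π t / 2^j)·σy belongs to the (j+1)-st level Cl_{j+1} of the Clifford hierarchy. -/
open scoped BigOperators

/-- The Pauli Z matrix. -/
noncomputable def sigmaZ : Matrix (Fin 2) (Fin 2) ℂ := !![1, 0; 0, -1]

/-- The single-qubit Pauli group: the (sub)monoid of `M₂(ℂ)` generated by
`σx`, `σz` and `i·I` (each generator is invertible inside this set, so it is a group). -/
noncomputable def Pauli : Set (Matrix (Fin 2) (Fin 2) ℂ) :=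
  (Submonoid.closure {sigmaX, sigmaZ, Complex.I • (1 : Matrix (Fin 2) (Fin 2) ℂ)} :
    Submonoid (Matrix (Fin 2) (Fin 2) ℂ))

/-- The single-qubit Clifford hierarchy: `Cl 1 = 𝒫` and
`Cl (k+1) = {U unitary | U P U† ∈ Cl k for all P ∈ 𝒫}` (we also set `Cl 0 = 𝒫`). -/
noncomputable def Cl : ℕ → Set (Matrix (Fin 2) (Fin 2) ℂ)
  | 0 => Pauli
  | 1 => Pauli
  | (k + 2) => {U | U ∈ Matrix.unitaryGroup (Fin 2) ℂ ∧
      ∀ P ∈ Pauli, U * P * U.conjTranspose ∈ Cl (k + 1)}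

/-! The equatorial operator `M α := Meq α` is a Hermitian involution with `M α σx M α = M (2α)`
and `M α σz M α = -σz`. Every Pauli has the form `i^a σx^b σz^c`, so conjugation by `M α` sends
it to `i^a M (2α)^b (-σz)^c`; since each level of the hierarchy is stable under multiplication by
Paulis, this lies in `Cl (k+1)` once `M (2α)` does. Halving the angle `j` times reduces the
theorem to `M (π t) = -σx` for odd `t`. -/

open Matrix Complex

noncomputable def pauliX (b : Bool) : Matrix (Fin 2) (Fin 2) ℂ := if b then sigmaX else 1

noncomputable def pauliZ (c : Bool) : Matrix (Fin 2) (Fin 2) ℂ := if c then sigmaZ else 1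

section PauliGroup

lemma sigmaX_mul_self : sigmaX * sigmaX = 1 := by
  ext i j; fin_cases i <;> fin_cases j <;> simp [sigmaX]

lemma sigmaZ_mul_self : sigmaZ * sigmaZ = 1 := by
  ext i j; fin_cases i <;> fin_cases j <;> simp [sigmaZ]

lemma sigmaZ_mul_sigmaX : sigmaZ * sigmaX = -(sigmaX * sigmaZ) := by
  ext i j; fin_cases i <;> fin_cases j <;> simp [sigmaX, sigmaZ]

lemma conjTranspose_sigmaX : sigmaXᴴ = sigmaX := by
  ext i j; fin_cases i <;> fin_cases j <;> simp [sigmaX]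

lemma conjTranspose_sigmaZ : sigmaZᴴ = sigmaZ := by
  ext i j; fin_cases i <;> fin_cases j <;> simp [sigmaZ]

lemma pauliX_mul_pauliX (b b' : Bool) : pauliX b * pauliX b' = pauliX (xor b b') := by
  cases b <;> cases b' <;> simp [pauliX, sigmaX_mul_self]

lemma pauliZ_mul_pauliZ (c c' : Bool) : pauliZ c * pauliZ c' = pauliZ (xor c c') := by
  cases c <;> cases c' <;> simp [pauliZ, sigmaZ_mul_self]

lemma pauliZ_mul_pauliX (c b : Bool) :
    pauliZ c * pauliX b = I ^ (if c && b then 2 else 0) • (pauliX b * pauliZ c) := by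
  cases c <;> cases b <;> simp [pauliX, pauliZ, sigmaZ_mul_sigmaX]

lemma sigmaX_mem_Pauli : sigmaX ∈ Pauli := Submonoid.subset_closure (by simp)

lemma sigmaZ_mem_Pauli : sigmaZ ∈ Pauli := Submonoid.subset_closure (by simp)

lemma Pauli.one_mem : (1 : Matrix (Fin 2) (Fin 2) ℂ) ∈ Pauli := Submonoid.one_mem _

lemma Pauli.mul_mem {P Q : Matrix (Fin 2) (Fin 2) ℂ} (hP : P ∈ Pauli) (hQ : Q ∈ Pauli) :
    P * Q ∈ Pauli :=
  Submonoid.mul_mem _ hP hQ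

lemma Pauli.I_pow_smul_mem (a : ℕ) {P : Matrix (Fin 2) (Fin 2) ℂ} (hP : P ∈ Pauli) :
    I ^ a • P ∈ Pauli := by
  have hI : I • (1 : Matrix (Fin 2) (Fin 2) ℂ) ∈ Pauli := Submonoid.subset_closure (by simp)
  have hIa := Submonoid.pow_mem _ hI a
  rw [smul_pow, one_pow] at hIa
  simpa using Pauli.mul_mem hIa hP

lemma Pauli.neg_mem {P : Matrix (Fin 2) (Fin 2) ℂ} (hP : P ∈ Pauli) : -P ∈ Pauli := by
  simpa using Pauli.I_pow_smul_mem 2 hP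

lemma Pauli.conjTranspose_mem {P : Matrix (Fin 2) (Fin 2) ℂ} (hP : P ∈ Pauli) : Pᴴ ∈ Pauli := by
  induction hP using Submonoid.closure_induction with
  | mem P hP =>
    rcases hP with rfl | rfl | rfl
    · simpa [conjTranspose_sigmaX] using sigmaX_mem_Pauli
    · simpa [conjTranspose_sigmaZ] using sigmaZ_mem_Pauli
    · simpa [conjTranspose_smul, pow_succ] using Pauli.I_pow_smul_mem 3 Pauli.one_mem
  | one => simpa using Pauli.one_mem
  | mul P Q _ _ hP hQ => simpa [conjTranspose_mul] using Pauli.mul_mem hQ hP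

lemma Pauli.mem_unitaryGroup {P : Matrix (Fin 2) (Fin 2) ℂ} (hP : P ∈ Pauli) :
    P ∈ unitaryGroup (Fin 2) ℂ := by
  suffices h : Submonoid.closure {sigmaX, sigmaZ, I • (1 : Matrix (Fin 2) (Fin 2) ℂ)} ≤
      unitaryGroup (Fin 2) ℂ from h hP
  rw [Submonoid.closure_le]
  rintro P (rfl | rfl | rfl) <;> rw [SetLike.mem_coe, mem_unitaryGroup_iff, star_eq_conjTranspose]
  · rw [conjTranspose_sigmaX, sigmaX_mul_self]
  · rw [conjTranspose_sigmaZ, sigmaZ_mul_self]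
  · simp [conjTranspose_smul, smul_smul]

lemma Pauli.exists_eq_smul_pauliX_mul_pauliZ {P : Matrix (Fin 2) (Fin 2) ℂ} (hP : P ∈ Pauli) :
    ∃ (a : ℕ) (b c : Bool), P = I ^ a • (pauliX b * pauliZ c) := by
  induction hP using Submonoid.closure_induction with
  | mem P hP =>
    rcases hP with rfl | rfl | rfl
    · exact ⟨0, true, false, by simp [pauliX, pauliZ]⟩
    · exact ⟨0, false, true, by simp [pauliX, pauliZ]⟩
    · exact ⟨1, false, false, by simp [pauliX, pauliZ]⟩
  | one => exact ⟨0, false, false, by simp [pauliX, pauliZ]⟩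
  | mul P Q _ _ hP hQ =>
    obtain ⟨a, b, c, rfl⟩ := hP
    obtain ⟨a', b', c', rfl⟩ := hQ
    refine ⟨a + a' + (if c && b' then 2 else 0), xor b b', xor c c', ?_⟩
    calc I ^ a • (pauliX b * pauliZ c) * I ^ a' • (pauliX b' * pauliZ c')
        = I ^ (a + a') • (pauliX b * (pauliZ c * pauliX b') * pauliZ c') := by
          rw [smul_mul_smul, pow_add]; simp only [mul_assoc]
      _ = _ := by
          rw [pauliZ_mul_pauliX, mul_smul_comm, smul_mul_assoc, smul_smul, ← pow_add,
            mul_assoc, mul_assoc, pauliZ_mul_pauliZ, ← mul_assoc, pauliX_mul_pauliX]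

end PauliGroup

section CliffordHierarchy

lemma Pauli_subset_Cl_and_mul_mem : ∀ k : ℕ, Pauli ⊆ Cl k ∧
    ∀ Q ∈ Pauli, ∀ U ∈ Cl k, Q * U ∈ Cl k ∧ U * Q ∈ Cl k
  | 0 | 1 => ⟨subset_rfl, fun _ hQ _ hU => ⟨Pauli.mul_mem hQ hU, Pauli.mul_mem hU hQ⟩⟩
  | k + 2 => by
    obtain ⟨hsub, hmul⟩ := Pauli_subset_Cl_and_mul_mem (k + 1)
    refine ⟨fun P hP => ⟨Pauli.mem_unitaryGroup hP, fun Q hQ => hsub ?_⟩,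
      fun Q hQ U ⟨hU, hUP⟩ => ⟨⟨mul_mem (Pauli.mem_unitaryGroup hQ) hU, fun P hP => ?_⟩,
        ⟨mul_mem hU (Pauli.mem_unitaryGroup hQ), fun P hP => ?_⟩⟩⟩
    · exact Pauli.mul_mem (Pauli.mul_mem hP hQ) (Pauli.conjTranspose_mem hP)
    · have h := (hmul Q hQ _ ((hmul _ (Pauli.conjTranspose_mem hQ) _ (hUP P hP)).2)).1
      simpa only [conjTranspose_mul, mul_assoc] using h
    · have h := hUP _ (Pauli.mul_mem (Pauli.mul_mem hQ hP) (Pauli.conjTranspose_mem hQ))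
      simpa only [conjTranspose_mul, mul_assoc] using h

lemma Pauli_subset_Cl (k : ℕ) : Pauli ⊆ Cl k := (Pauli_subset_Cl_and_mul_mem k).1

lemma Cl.I_pow_smul_mem {k : ℕ} (a : ℕ) {U : Matrix (Fin 2) (Fin 2) ℂ} (hU : U ∈ Cl k) :
    I ^ a • U ∈ Cl k := by
  have h := ((Pauli_subset_Cl_and_mul_mem k).2 _ (Pauli.I_pow_smul_mem a Pauli.one_mem) U hU).1
  rwa [smul_mul_assoc, one_mul] at h

lemma Cl.mul_mem_of_mem_Pauli {k : ℕ} {U Q : Matrix (Fin 2) (Fin 2) ℂ} (hU : U ∈ Cl k)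
    (hQ : Q ∈ Pauli) : U * Q ∈ Cl k :=
  ((Pauli_subset_Cl_and_mul_mem k).2 Q hQ U hU).2

lemma mem_Cl_of_forall_conj_pauliX_mul_pauliZ {k : ℕ} {U : Matrix (Fin 2) (Fin 2) ℂ}
    (hU : U ∈ unitaryGroup (Fin 2) ℂ)
    (h : ∀ b c : Bool, U * (pauliX b * pauliZ c) * Uᴴ ∈ Cl (k + 1)) : U ∈ Cl (k + 2) := by
  refine ⟨hU, fun P hP => ?_⟩
  obtain ⟨a, b, c, rfl⟩ := Pauli.exists_eq_smul_pauliX_mul_pauliZ hP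
  simpa only [mul_smul_comm, smul_mul_assoc] using Cl.I_pow_smul_mem a (h b c)

end CliffordHierarchy

section Equatorial

lemma Meq_eq_exp (α : ℝ) :
    Meq α = !![0, exp (-(α * I)); exp (α * I), 0] := by
  have h₁ : exp (α * I) = Real.cos α + Real.sin α * I := by
    rw [exp_mul_I, ofReal_cos, ofReal_sin]
  have h₂ : exp (-(α * I)) = Real.cos α - Real.sin α * I := by
    rw [← neg_mul, exp_mul_I, cos_neg, sin_neg, ofReal_cos, ofReal_sin]; ring
  ext i j
  fin_cases i <;> fin_cases j <;> simp [Meq, sigmaX, sigmaY, h₁, h₂]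
  ring

lemma Meq_mul_self (α : ℝ) : Meq α * Meq α = 1 := by
  ext i j
  fin_cases i <;> fin_cases j <;> simp [Meq_eq_exp, ← exp_add]

lemma conjTranspose_Meq (α : ℝ) : (Meq α)ᴴ = Meq α := by
  ext i j
  fin_cases i <;> fin_cases j <;> simp [Meq_eq_exp, ← exp_conj]

lemma Meq_mem_unitaryGroup (α : ℝ) : Meq α ∈ unitaryGroup (Fin 2) ℂ := by
  rw [mem_unitaryGroup_iff, star_eq_conjTranspose, conjTranspose_Meq, Meq_mul_self]

lemma Meq_mul_sigmaX_mul_Meq (α : ℝ) : Meq α * sigmaX * Meq α = Meq (2 * α) := by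
  ext i j
  fin_cases i <;> fin_cases j <;> simp [Meq_eq_exp, sigmaX, ← exp_add] <;> ring_nf

lemma Meq_mul_sigmaZ_mul_Meq (α : ℝ) : Meq α * sigmaZ * Meq α = -sigmaZ := by
  ext i j
  fin_cases i <;> fin_cases j <;> simp [Meq_eq_exp, sigmaZ, ← exp_add]

lemma Meq_pi_mul_of_odd {t : ℤ} (ht : Odd t) : Meq (Real.pi * t) = -sigmaX := by
  have hcos : Real.cos (Real.pi * t) = -1 := by rw [mul_comm, Real.cos_int_mul_pi, ht.neg_one_zpow]
  have hsin : Real.sin (Real.pi * t) = 0 := by rw [mul_comm, Real.sin_int_mul_pi]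
  simp [Meq, hcos, hsin]

lemma Meq_mem_Cl_of_Meq_two_mul_mem {k : ℕ} {α : ℝ} (h : Meq (2 * α) ∈ Cl (k + 1)) :
    Meq α ∈ Cl (k + 2) := by
  refine mem_Cl_of_forall_conj_pauliX_mul_pauliZ (Meq_mem_unitaryGroup α) fun b c => ?_
  have hconj : Meq α * (pauliX b * pauliZ c) * (Meq α)ᴴ =
      (Meq α * pauliX b * Meq α) * (Meq α * pauliZ c * Meq α) := by
    simp only [conjTranspose_Meq, mul_assoc, ← mul_assoc (Meq α) (Meq α), Meq_mul_self, one_mul]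
  have hZ : Meq α * pauliZ c * Meq α ∈ Pauli := by
    cases c
    · simpa [pauliZ, Meq_mul_self] using Pauli.one_mem
    · simpa [pauliZ, Meq_mul_sigmaZ_mul_Meq] using Pauli.neg_mem sigmaZ_mem_Pauli
  rw [hconj]
  cases b
  · simpa [pauliX, Meq_mul_self] using Pauli_subset_Cl _ hZ
  · simpa [pauliX, Meq_mul_sigmaX_mul_Meq] using Cl.mul_mem_of_mem_Pauli h hZ

end Equatorial

/-- For every odd integer `t` and natural number `j`, the equatorial measurement operator
`cos(π t / 2^j) σx + sin(π t / 2^j) σy` lies in the `(j+1)`-st level of the Clifford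
hierarchy. -/
theorem equatorial_operator_clifford_level (t : ℤ) (ht : Odd t) (j : ℕ) :
    Meq (Real.pi * (t : ℝ) / 2 ^ j) ∈ Cl (j + 1) := by
  induction j with
  | zero =>
    rw [pow_zero, div_one, Meq_pi_mul_of_odd ht]
    exact Pauli.neg_mem sigmaX_mem_Pauli
  | succ j ih =>
    apply Meq_mem_Cl_of_Meq_two_mul_mem
    convert ih using 2
    rw [pow_succ]; ring
end
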